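/- arXiv:1907.07209 — 4 statements merged into one kernel-verified Lean document; each statement's English description precedes it below -/
import Mathlib

section
/- Let F(x,y) = a x^3 + b x^2 y + c x y^2 + d y^3 be an integral binary cubic form with 3 | a, 3 | b, 3 | c, 3 ∤ d, and ord_3(Δ(F)) = 5 where Δ(F) = b^2c^2 - 4ac^3 - 4b^3d - 27a^2d^2 + 18abcd. If additionally 9 ∤ a, then 9 | b and 9 | c. -/
/-- Let `F = a x³ + b x² y + c x y² + d y³` be an integral binary cubic form with
`3 ∣ a`, `3 ∣ b`, `3 ∣ c`, `3 ∤ d`, and suppose `ord₃(Δ(F)) = 5`, i.e.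
`3⁵ ∣ Δ(F)` and `3⁶ ∤ Δ(F)` where
`Δ(F) = b²c² - 4ac³ - 4b³d - 27a²d² + 18abcd`. If moreover `9 ∤ a`, then
`9 ∣ b` and `9 ∣ c`. -/
theorem stmt14 (a b c d : ℤ) (ha : 3 ∣ a) (hb : 3 ∣ b) (hc : 3 ∣ c)
    (hd : ¬(3 ∣ d))
    (hΔ5 : (3 : ℤ) ^ 5 ∣
      b ^ 2 * c ^ 2 - 4 * a * c ^ 3 - 4 * b ^ 3 * d - 27 * a ^ 2 * d ^ 2
        + 18 * a * b * c * d)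
    (hΔ6 : ¬((3 : ℤ) ^ 6 ∣
      b ^ 2 * c ^ 2 - 4 * a * c ^ 3 - 4 * b ^ 3 * d - 27 * a ^ 2 * d ^ 2
        + 18 * a * b * c * d))
    (ha9 : ¬(9 ∣ a)) :
    9 ∣ b ∧ 9 ∣ c := by
  obtain ⟨a', rfl⟩ := ha
  obtain ⟨b', rfl⟩ := hb
  obtain ⟨c', rfl⟩ := hc
  have ha' : ¬ (3 : ℤ) ∣ a' := fun ⟨k, hk⟩ => ha9 ⟨k, by linarith⟩
  -- divide the discriminant divisibility by 27
  have hE : (9 : ℤ) ∣ 3*b'^2*c'^2 - 12*a'*c'^3 - 4*b'^3*d - 9*a'^2*d^2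
      + 18*a'*b'*c'*d := by
    obtain ⟨k, hk⟩ := hΔ5
    exact ⟨k, by linarith⟩
  -- mod 3: 3 ∣ 4 b'^3 d
  have hb3 : (3 : ℤ) ∣ b' := by
    have h1 : (3 : ℤ) ∣ b'^3 * d := by
      have h2 : (3 : ℤ) ∣ 4*(b'^3*d) := by
        obtain ⟨k, hk⟩ := hE
        exact ⟨b'^2*c'^2 - 4*a'*c'^3 - 3*a'^2*d^2 + 6*a'*b'*c'*d - 3*k, by linarith⟩
      have : (3:ℤ) ∣ 4 ∨ (3:ℤ) ∣ b'^3*d := (Int.prime_three.dvd_mul).1 h2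
      rcases this with h | h
      · omega
      · exact h
    rcases (Int.prime_three.dvd_mul).1 h1 with h | h
    · exact Int.prime_three.dvd_of_dvd_pow h
    · exact absurd h hd
  obtain ⟨b'', rfl⟩ := hb3
  have hc3 : (3 : ℤ) ∣ c' := by
    have h2 : (9 : ℤ) ∣ 12*(a'*c'^3) := by
      obtain ⟨k, hk⟩ := hE
      exact ⟨3*b''^2*c'^2 - 12*b''^3*d - a'^2*d^2 + 6*a'*b''*c'*d - k, by ring_nf; ring_nf at hk; linarith⟩
    have h3 : (3 : ℤ) ∣ a'*c'^3 := by
      obtain ⟨k, hk⟩ := h2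
      have h4 : (3:ℤ) ∣ 4*(a'*c'^3) := ⟨k, by linarith⟩
      rcases (Int.prime_three.dvd_mul).1 h4 with h | h
      · omega
      · exact h
    rcases (Int.prime_three.dvd_mul).1 h3 with h | h
    · exact absurd h ha'
    · exact Int.prime_three.dvd_of_dvd_pow h
  obtain ⟨c'', rfl⟩ := hc3
  exact ⟨⟨b'', by ring⟩, ⟨c'', by ring⟩⟩
end

section
/- Let F(x,y) = a x^3 + b x^2 y + c x y^2 + d y^3 be an integral binary cubic form that is congruent to (mx + ny)^3 modulo 3 for some integers m, n. Then F is GL2(Z)-equivalent (under the twisted action) to a form a' x^3 + b' x^2 y + c' x y^2 + d' y^3 with a' ≡ b' ≡ c' ≡ 0 (mod 3). -/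
/-- If the integral binary cubic form `F = a x³ + b x² y + c x y² + d y³` is
congruent to a cube `(mx + ny)³` modulo 3, then `F` is `GL₂(ℤ)`-equivalent
under the twisted action `(g·F)(x,y) = det(g)⁻¹ F((x,y)g)` to a form whose
`x³`, `x²y` and `xy²` coefficients are all divisible by 3. -/
theorem stmt15 (a b c d m n : ℤ)
    (hcube : ∀ x y : ℤ,
      (a * x ^ 3 + b * x ^ 2 * y + c * x * y ^ 2 + d * y ^ 3) ≡
        (m * x + n * y) ^ 3 [ZMOD 3]) :
    ∃ g : Matrix (Fin 2) (Fin 2) ℤ, (g.det = 1 ∨ g.det = -1) ∧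
      ∃ a' b' c' d' : ℤ, (3 ∣ a' ∧ 3 ∣ b' ∧ 3 ∣ c') ∧
        ∀ x y : ℤ,
          a' * x ^ 3 + b' * x ^ 2 * y + c' * x * y ^ 2 + d' * y ^ 3 =
            g.det * (a * (x * g 0 0 + y * g 1 0) ^ 3
              + b * (x * g 0 0 + y * g 1 0) ^ 2 * (x * g 0 1 + y * g 1 1)
              + c * (x * g 0 0 + y * g 1 0) * (x * g 0 1 + y * g 1 1) ^ 2
              + d * (x * g 0 1 + y * g 1 1) ^ 3) := by
  obtain ⟨k1, h1⟩ := (hcube 1 1).dvd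
  obtain ⟨k2, h2⟩ := (hcube 1 (-1)).dvd
  obtain ⟨k3, h3⟩ := (hcube 1 0).dvd
  obtain ⟨k4, h4⟩ := (hcube 0 1).dvd
  have h2c : 2 * c = 3 * (2*m*n^2 - (k1 + k2 - 2*k3)) := by linear_combination -h1 - h2 + 2*h3
  have h2b : 2 * b = 3 * (2*m^2*n - (k1 - k2 - 2*k4)) := by linear_combination -h1 + h2 + 2*h4
  have hb : (3:ℤ) ∣ b := by omega
  have hc : (3:ℤ) ∣ c := by omega
  obtain ⟨kb, hkb⟩ := hb
  obtain ⟨kc, hkc⟩ := hc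
  by_cases hm : (3:ℤ) ∣ m
  · -- then 3 ∣ a, take the identity matrix
    obtain ⟨t, ht⟩ := hm
    refine ⟨!![1, 0; 0, 1], Or.inl (by simp [Matrix.det_fin_two_of]),
      a, b, c, d,
      ⟨⟨t^3*9 - k3, by linear_combination -h3 + (m^2 + 3*m*t + 9*t^2) * ht⟩,
        ⟨kb, hkb⟩, ⟨kc, hkc⟩⟩, fun x y => ?_⟩
    simp [Matrix.det_fin_two_of]
  · -- m ≢ 0 mod 3; use g = !![-n*m, 1; -1, 0]
    have hm2 : (3:ℤ) ∣ m^2 - 1 := by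
      obtain ⟨t, ht⟩ : ∃ t, m = 3*t + 1 ∨ m = 3*t + 2 := ⟨m / 3, by omega⟩
      rcases ht with h | h
      · exact ⟨3*t^2 + 2*t, by subst h; ring⟩
      · exact ⟨3*t^2 + 4*t + 1, by subst h; ring⟩
    obtain ⟨km, hkm⟩ := hm2
    refine ⟨!![-n*m, 1; -1, 0], ?_, ?_⟩
    · left; simp [Matrix.det_fin_two_of]
    · refine ⟨a*(-n*m)^3 + b*(n*m)^2 + c*(-(n*m)) + d,
        -3*a*(n*m)^2 + 2*b*(n*m) - c,
        -3*a*(n*m) + b,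
        -a, ⟨?_, ?_, ?_⟩, fun x y => ?_⟩
      · exact ⟨kb*n^2*m^2 - kc*n*m + k3*n^3*m^3 - k4 - km*(n^3*(1 + m^2 + m^4)), by
          linear_combination (n^2*m^2) * hkb - (n*m) * hkc + (n^3*m^3) * h3 - h4
            - (n^3*(1 + m^2 + m^4)) * hkm⟩
      · exact ⟨-a*(n*m)^2 + 2*kb*n*m - kc, by linear_combination (2*n*m) * hkb - hkc⟩
      · exact ⟨-a*n*m + kb, by linear_combination hkb⟩
      · simp [Matrix.det_fin_two_of]
        ring
end

section
/- Let K be a non-pure complex cubic field, and let F(x,y) = ax^3 + bx^2y + cxy^2 + dy^3 be an irreducible integral binary cubic form corresponding to an order in K, with θ the real root of F(x,1). Then the element (3bd θ^{-1} + 2bc + 3ac θ) is NOT a rational multiple of (9ad θ^{-1} + (b^2 + 3ac) + 3ab θ) in R; equivalently, the real part (3bd θ^{-1} + 2bc + 3acθ)/(9adθ^{-1} + (b^2+3ac) + 3abθ) of the shape of the order is irrational. Here one may assume: a, d ≠ 0, b, c not both zero, in fact b ≠ 0 and c ≠ 0, b^2 - 3ac ≠ 0, θ is irrational of degree 3 over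 Q, and F(θ,1) = 0. -/
/-!
Multiplying the proportionality by `θ` turns both sides into `ℚ`-combinations of `1, θ, θ²`.
Comparing the constant terms gives `b = 3aρ`, comparing the `θ²` terms gives `c = bρ`, and
together these force `b² = 3ac`.
-/

lemma eq_of_linearIndependent_one_self_sq {θ : ℝ}
    (hdeg : ∀ p q r : ℚ, (p : ℝ) + q * θ + r * θ ^ 2 = 0 → p = 0 ∧ q = 0 ∧ r = 0)
    {p q r p' q' r' : ℚ}
    (h : (p : ℝ) + q * θ + r * θ ^ 2 = p' + q' * θ + r' * θ ^ 2) :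
    p = p' ∧ q = q' ∧ r = r' := by
  obtain ⟨hp, hq, hr⟩ := hdeg (p - p') (q - q') (r - r') (by push_cast; linear_combination h)
  exact ⟨sub_eq_zero.mp hp, sub_eq_zero.mp hq, sub_eq_zero.mp hr⟩

lemma sq_eq_three_mul_of_proportional {K : Type*} [Field K] [CharZero K] {a b c d ρ : K}
    (ha : a ≠ 0) (hd : d ≠ 0) (hconst : 3 * b * d = ρ * (9 * a * d))
    (hsq : 3 * a * c = ρ * (3 * a * b)) :
    b ^ 2 = 3 * a * c := by
  have hb : b = 3 * a * ρ :=
    mul_left_cancel₀ (mul_ne_zero three_ne_zero hd) (by linear_combination hconst)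
  have hc : c = b * ρ :=
    mul_left_cancel₀ (mul_ne_zero three_ne_zero ha) (by linear_combination hsq)
  linear_combination b * hb - 3 * a * hc

theorem stmt16_general (a b c d : ℤ) (θ : ℝ)
    (ha : a ≠ 0) (hd : d ≠ 0)
    (hbc : b ^ 2 - 3 * a * c ≠ 0) (hθ0 : θ ≠ 0)
    (hdeg3 : ∀ p q r : ℚ, (p : ℝ) + q * θ + r * θ ^ 2 = 0 → p = 0 ∧ q = 0 ∧ r = 0) :
    ¬∃ ρ : ℚ,
      (3 * b * d : ℝ) * θ⁻¹ + 2 * b * c + 3 * a * c * θ =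
        ρ * ((9 * a * d : ℝ) * θ⁻¹ + (b ^ 2 + 3 * a * c) + 3 * a * b * θ) := by
  rintro ⟨ρ, h⟩
  have hθ : ((3 * b * d : ℚ) : ℝ) + (2 * b * c : ℚ) * θ + (3 * a * c : ℚ) * θ ^ 2 =
      ((ρ * (9 * a * d) : ℚ) : ℝ) + (ρ * (b ^ 2 + 3 * a * c) : ℚ) * θ
        + (ρ * (3 * a * b) : ℚ) * θ ^ 2 := by
    push_cast
    linear_combination θ * h - (3 * b * d - ρ * (9 * a * d)) * inv_mul_cancel₀ hθ0
  obtain ⟨hconst, -, hsq⟩ := eq_of_linearIndependent_one_self_sq hdeg3 hθ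
  have hq : (b : ℚ) ^ 2 = 3 * a * c :=
    sq_eq_three_mul_of_proportional (by exact_mod_cast ha) (by exact_mod_cast hd) hconst hsq
  exact hbc (sub_eq_zero.mpr (by exact_mod_cast hq))

/-- Irrationality of the real part of the shape of a non-pure complex cubic
order: if `F = a x³ + b x² y + c x y² + d y³` corresponds to an order in a
non-pure complex cubic field (so `a, d, b, c ≠ 0`, `b² - 3ac ≠ 0`) with real
root `θ` of `F(x,1)` of degree 3 over ℚ, then `3bd θ⁻¹ + 2bc + 3ac θ` is not a
rational multiple of `9ad θ⁻¹ + (b² + 3ac) + 3ab θ`. -/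
theorem stmt16 (a b c d : ℤ) (θ : ℝ)
    (ha : a ≠ 0) (hd : d ≠ 0) (hb : b ≠ 0) (hc : c ≠ 0)
    (hbc : b ^ 2 - 3 * a * c ≠ 0) (hθ0 : θ ≠ 0)
    (hdeg3 : ∀ p q r : ℚ, (p : ℝ) + q * θ + r * θ ^ 2 = 0 → p = 0 ∧ q = 0 ∧ r = 0)
    (hroot : (a : ℝ) * θ ^ 3 + b * θ ^ 2 + c * θ + d = 0) :
    ¬∃ ρ : ℚ,
      (3 * b * d : ℝ) * θ⁻¹ + 2 * b * c + 3 * a * c * θ =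
        ρ * ((9 * a * d : ℝ) * θ⁻¹ + (b ^ 2 + 3 * a * c) + 3 * a * b * θ) :=
  stmt16_general a b c d θ ha hd hbc hθ0 hdeg3
end

section
/- Let Q = r x^2 + s xy + t y^2 be an indefinite real binary quadratic form (t ≠ 0, D = s^2 - 4rt > 0), Q'(x,y) = t x^2 - s xy + r y^2 its adjoint, and define Δ(b,c) = -Q'(b,c)^2 Δ(Q) / (3 r^2 t^2) for (b,c) ∈ R^2. Then for any g in GO^0_Q(R) acting by the twisted cubic action g ∗ v = det(g)^{-1} g^3 v, one has Δ(g ∗ (b,c)) = det(g)^2 Δ(b,c). -/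
/-!
A similitude `g` of `Q = r x² + s xy + t y²` with multiplier `c` satisfies `g M gᵀ = c M` for the
Gram matrix `M` of `Q`. Taking determinants gives `c² = det(g)²`, as `det M ≠ 0`; taking adjugates
and evaluating the adjoint form `Q'` (whose Gram matrix is `adj M`) at `g v`, where
`adj g · g = det g`, gives `c · Q'(g v) = det(g)² · Q'(v)`. Hence `Q'(g v)² = det(g)² Q'(v)²` when
`det g ≠ 0`, so `Q'(g ∗ v)² = det(g)⁻⁴ · det(g)⁶ · Q'(v)²`, and `Δ` is a constant multiple of `Q'²`.
-/

open Matrix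

section CommRing

variable {R : Type*} [CommRing R]

def binaryForm (r s t : R) (v : Fin 2 → R) : R :=
  r * v 0 ^ 2 + s * v 0 * v 1 + t * v 1 ^ 2

def adjointForm (r s t : R) (v : Fin 2 → R) : R :=
  t * v 0 ^ 2 - s * v 0 * v 1 + r * v 1 ^ 2

/-- `Q((x, y) g) = c Q(x, y)`: `g` acts on row vectors. -/
def IsSimilitude (r s t c : R) (g : Matrix (Fin 2) (Fin 2) R) : Prop :=
  ∀ v : Fin 2 → R, binaryForm r s t (v ᵥ* g) = c * binaryForm r s t v

lemma adjointForm_smul (r s t a : R) (v : Fin 2 → R) :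
    adjointForm r s t (a • v) = a ^ 2 * adjointForm r s t v := by
  simp only [adjointForm, Pi.smul_apply, smul_eq_mul]
  ring

namespace IsSimilitude

variable {r s t c : R} {g : Matrix (Fin 2) (Fin 2) R}

lemma coeff_eqs (h : IsSimilitude r s t c g) :
    r * g 0 0 ^ 2 + s * g 0 0 * g 0 1 + t * g 0 1 ^ 2 = c * r ∧
    r * g 1 0 ^ 2 + s * g 1 0 * g 1 1 + t * g 1 1 ^ 2 = c * t ∧
    2 * r * g 0 0 * g 1 0 + s * (g 0 0 * g 1 1 + g 0 1 * g 1 0) + 2 * t * g 0 1 * g 1 1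
      = c * s := by
  have h10 := h ![1, 0]
  have h01 := h ![0, 1]
  have h11 := h ![1, 1]
  simp only [binaryForm, vecMul, dotProduct, Fin.sum_univ_two, cons_val_zero,
    cons_val_one] at h10 h01 h11
  refine ⟨by linear_combination h10, by linear_combination h01, ?_⟩
  linear_combination h11 - h10 - h01

lemma sq_sub_det_sq_mul_disc (h : IsSimilitude r s t c g) :
    (c ^ 2 - g.det ^ 2) * (s ^ 2 - 4 * r * t) = 0 := by
  obtain ⟨e1, e2, e3⟩ := h.coeff_eqs
  rw [det_fin_two]
  linear_combination
    (4 * (r * g 1 0 ^ 2 + s * g 1 0 * g 1 1 + t * g 1 1 ^ 2)) * e1 + (4 * c * r) * e2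
      - (2 * r * g 0 0 * g 1 0 + s * (g 0 0 * g 1 1 + g 0 1 * g 1 0) + 2 * t * g 0 1 * g 1 1
          + c * s) * e3

lemma mul_adjointForm_mulVec (h : IsSimilitude r s t c g) (v : Fin 2 → R) :
    c * adjointForm r s t (g *ᵥ v) = g.det ^ 2 * adjointForm r s t v := by
  obtain ⟨e1, e2, e3⟩ := h.coeff_eqs
  simp only [adjointForm, mulVec, dotProduct, Fin.sum_univ_two, det_fin_two]
  set w₀ := g 0 0 * v 0 + g 0 1 * v 1
  set w₁ := g 1 0 * v 0 + g 1 1 * v 1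
  linear_combination -(w₀ ^ 2 * e2 + w₁ ^ 2 * e1 - w₀ * w₁ * e3)

end IsSimilitude

end CommRing

section Field

variable {K : Type*} [Field K]

namespace IsSimilitude

variable {r s t c : K} {g : Matrix (Fin 2) (Fin 2) K}

lemma sq_eq_det_sq (h : IsSimilitude r s t c g) (hD : s ^ 2 - 4 * r * t ≠ 0) :
    c ^ 2 = g.det ^ 2 :=
  sub_eq_zero.mp ((mul_eq_zero.mp h.sq_sub_det_sq_mul_disc).resolve_right hD)

lemma adjointForm_mulVec_sq (h : IsSimilitude r s t c g) (hD : s ^ 2 - 4 * r * t ≠ 0)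
    (hdet : g.det ≠ 0) (v : Fin 2 → K) :
    adjointForm r s t (g *ᵥ v) ^ 2 = g.det ^ 2 * adjointForm r s t v ^ 2 := by
  have hc := h.sq_eq_det_sq hD
  have hmul := congrArg (· ^ 2) (h.mul_adjointForm_mulVec v)
  simp only [mul_pow, hc] at hmul
  apply mul_left_cancel₀ (pow_ne_zero 2 hdet)
  linear_combination hmul

lemma adjointForm_pow_mulVec_sq (h : IsSimilitude r s t c g) (hD : s ^ 2 - 4 * r * t ≠ 0)
    (hdet : g.det ≠ 0) (n : ℕ) (v : Fin 2 → K) :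
    adjointForm r s t ((g ^ n) *ᵥ v) ^ 2 = g.det ^ (2 * n) * adjointForm r s t v ^ 2 := by
  induction n with
  | zero => simp
  | succ n ih =>
    rw [pow_succ' g n, ← mulVec_mulVec, h.adjointForm_mulVec_sq hD hdet, ih]
    ring

lemma adjointForm_twistedCubic_sq (h : IsSimilitude r s t c g) (hD : s ^ 2 - 4 * r * t ≠ 0)
    (v : Fin 2 → K) :
    adjointForm r s t (g.det⁻¹ • (g ^ 3 *ᵥ v)) ^ 2 = g.det ^ 2 * adjointForm r s t v ^ 2 := by
  rcases eq_or_ne g.det 0 with hdet | hdet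
  · simp [hdet, adjointForm]
  · rw [adjointForm_smul, mul_pow, h.adjointForm_pow_mulVec_sq hD hdet]
    field_simp

end IsSimilitude

end Field

theorem stmt19_general (r s t b c : ℝ)
    (hD : 0 < s ^ 2 - 4 * r * t)
    (g : Matrix (Fin 2) (Fin 2) ℝ)
    (cg : ℝ)
    (hsim : ∀ x y : ℝ,
      r * (x * g 0 0 + y * g 1 0) ^ 2
          + s * (x * g 0 0 + y * g 1 0) * (x * g 0 1 + y * g 1 1)
          + t * (x * g 0 1 + y * g 1 1) ^ 2 =
        cg * (r * x ^ 2 + s * x * y + t * y ^ 2)) :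
    let Δ : (Fin 2 → ℝ) → ℝ := fun v =>
      -(t * (v 0) ^ 2 - s * (v 0) * (v 1) + r * (v 1) ^ 2) ^ 2
        * (s ^ 2 - 4 * r * t) / (3 * r ^ 2 * t ^ 2)
    Δ ((g.det)⁻¹ • ((g ^ 3).mulVec ![b, c])) = (g.det) ^ 2 * Δ ![b, c] := by
  intro Δ
  have hg : IsSimilitude r s t cg g := fun v => by
    simpa [binaryForm, vecMul, dotProduct, Fin.sum_univ_two] using hsim (v 0) (v 1)
  have key := hg.adjointForm_twistedCubic_sq hD.ne' ![b, c]
  change -adjointForm r s t _ ^ 2 * _ / _ = _ * (-adjointForm r s t _ ^ 2 * _ / _)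
  rw [key]
  ring

/-- Scaling of the discriminant under the twisted cubic action: for an
indefinite real binary quadratic form `Q = r x² + s xy + t y²` (`r, t ≠ 0`,
`Δ(Q) = s² - 4rt > 0`) with adjoint `Q'(x,y) = t x² - s xy + r y²`, set
`Δ(b,c) = -Q'(b,c)² Δ(Q) / (3 r² t²)`. If `g ∈ GO⁰_Q(ℝ)` (i.e. `det g > 0` and
`Q((x,y)g) = c_g Q(x,y)` for some `c_g > 0`), then for the twisted cubic action
`g ∗ v = det(g)⁻¹ • (g³ v)` one has `Δ(g ∗ (b,c)) = det(g)² Δ(b,c)`. -/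
theorem stmt19 (r s t b c : ℝ) (hr : r ≠ 0) (ht : t ≠ 0)
    (hD : 0 < s ^ 2 - 4 * r * t)
    (g : Matrix (Fin 2) (Fin 2) ℝ) (hdet : 0 < g.det)
    (cg : ℝ) (hcg : 0 < cg)
    (hsim : ∀ x y : ℝ,
      r * (x * g 0 0 + y * g 1 0) ^ 2
          + s * (x * g 0 0 + y * g 1 0) * (x * g 0 1 + y * g 1 1)
          + t * (x * g 0 1 + y * g 1 1) ^ 2 =
        cg * (r * x ^ 2 + s * x * y + t * y ^ 2)) :
    let Δ : (Fin 2 → ℝ) → ℝ := fun v =>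
      -(t * (v 0) ^ 2 - s * (v 0) * (v 1) + r * (v 1) ^ 2) ^ 2
        * (s ^ 2 - 4 * r * t) / (3 * r ^ 2 * t ^ 2)
    Δ ((g.det)⁻¹ • ((g ^ 3).mulVec ![b, c])) = (g.det) ^ 2 * Δ ![b, c] :=
  stmt19_general r s t b c hD g cg hsim
end
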